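/- For every K > 0 and M₂ > 0 there exists a constant C > 0 depending only on K and M₂ such that the following holds. Let d ≥ 1, 0 < m ≤ M₂, 0 < h ≤ 1/4, let S = [[2I_d, I_d],[I_d, I_d]] be the 2d×2d block matrix, and let A be any 2d×2d real matrix with AᵀSA ≼ (1 − mh/(2M₂))·S. Let z₀ ∈ ℝ^{2d}, and let w be an ℝ^{2d}-valued random vector whose law is symmetric (w and −w have the same distribution) and which satisfies E‖w‖⁸ ≤ K·d⁴. Then E[((Az₀ + √h·w)ᵀ S (Az₀ + √h·w))⁴] ≤ (1 − mh/(2M₂))·(z₀ᵀSz₀)⁴ + C·d⁴·h/m³. -/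

import Mathlib

open Matrix MeasureTheory

/-- The twisted 2d×2d block matrix `S = [[2I, I], [I, I]]`. -/
noncomputable def Smat (d : ℕ) : Matrix (Fin d ⊕ Fin d) (Fin d ⊕ Fin d) ℝ :=
  Matrix.fromBlocks ((2 : ℝ) • 1) 1 1 1

/-! ### Auxiliary real arithmetic lemmas -/

lemma amgm1 (a b : ℝ) (ha : 0 ≤ a) (hb : 0 ≤ b) : a * b^3 ≤ a^4 + b^4 := by
  nlinarith [sq_nonneg (a - b), sq_nonneg (a + b), sq_nonneg (a*a - b*b), sq_nonneg (a*b),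
    mul_nonneg ha hb, sq_nonneg a, sq_nonneg b]

lemma amgm2 (a b : ℝ) (ha : 0 ≤ a) (hb : 0 ≤ b) : a^2 * b^2 ≤ a^4 + b^4 := by
  nlinarith [sq_nonneg (a*a - b*b)]

lemma amgm3 (a b : ℝ) (ha : 0 ≤ a) (hb : 0 ≤ b) : a^3 * b ≤ a^4 + b^4 := by
  nlinarith [sq_nonneg (a - b), sq_nonneg (a + b), sq_nonneg (a*a - b*b), sq_nonneg (a*b),
    mul_nonneg ha hb, sq_nonneg a, sq_nonneg b]

lemma amgm4 (a b : ℝ) (ha : 0 ≤ a) (hb : 0 ≤ b) (j : ℕ) (hj : j ≤ 4) :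
    a^j * b^(4-j) ≤ a^4 + b^4 := by
  interval_cases j
  · norm_num
    nlinarith [pow_nonneg ha 4]
  · norm_num
    nlinarith [amgm1 a b ha hb]
  · norm_num
    nlinarith [amgm2 a b ha hb]
  · norm_num
    nlinarith [amgm3 a b ha hb]
  · norm_num
    nlinarith [pow_nonneg hb 4]

lemma evenpart (A B C : ℝ) (hA : 0 ≤ A) (hC : 0 ≤ C) (hB : B^2 ≤ 4*A*C) :
    (A + B + C)^4 + (A - B + C)^4 ≤ 2*(A^4 + 28*A^3*C + 70*A^2*C^2 + 28*A*C^3 + C^4) := by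
  nlinarith [mul_nonneg (mul_nonneg hA hC) (sq_nonneg (A+C)), sq_nonneg B, sq_nonneg (A+C),
    mul_nonneg (sub_nonneg.2 hB) (sq_nonneg (A+C)),
    mul_nonneg (sub_nonneg.2 hB)
      (add_nonneg (mul_nonneg (mul_nonneg (by norm_num : (0:ℝ) ≤ 4) hA) hC) (sq_nonneg B))]

lemma even_dom (A B C : ℝ) (hA : 0 ≤ A) (hC : 0 ≤ C) (hB : B^2 ≤ 4*A*C) :
    (A + B + C)^4 ≤ 256*(A^4 + C^4) := by
  have h1 : (A + B + C)^2 ≤ 4*(A+C)^2 := by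
    nlinarith [hB, sq_nonneg (B - (A+C)), sq_nonneg (B + (A+C)), mul_nonneg hA hC,
      sq_nonneg (A - C)]
  have h2 : ((A + B + C)^2)^2 ≤ (4*(A+C)^2)^2 := by
    apply pow_le_pow_left₀ (sq_nonneg _) h1
  have h3 : (A+C)^4 ≤ 15*(A^4 + C^4) := by
    nlinarith [amgm1 A C hA hC, amgm2 A C hA hC, amgm3 A C hA hC]
  nlinarith [h2, h3]

lemma young (X Y θ : ℝ) (hX : 0 ≤ X) (hY : 0 ≤ Y) (hθ : 0 < θ) (hθ1 : θ ≤ 1) :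
    Y*X^3 ≤ θ*X^4 + Y^4/θ^3 ∧ Y^2*X^2 ≤ θ*X^4 + Y^4/θ^3 ∧
      Y^3*X ≤ θ*X^4 + Y^4/θ^3 ∧ Y^4 ≤ θ*X^4 + Y^4/θ^3 := by
  have h3 : (0:ℝ) < θ^3 := pow_pos hθ 3
  have hm : ∀ Z : ℝ, Z - θ*X^4 ≤ Y^4/θ^3 → Z ≤ θ*X^4 + Y^4/θ^3 := fun Z hZ => by linarith
  refine ⟨hm _ ?_, hm _ ?_, hm _ ?_, hm _ ?_⟩ <;> rw [le_div_iff₀ h3]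
  · nlinarith [amgm1 Y (θ*X) hY (mul_nonneg hθ.le hX)]
  · nlinarith [amgm2 Y (θ*X) hY (mul_nonneg hθ.le hX),
      mul_nonneg (mul_nonneg (mul_nonneg hθ.le (sub_nonneg.2 hθ1)) (sq_nonneg Y)) (sq_nonneg X)]
  · have hθ3 : θ^3 ≤ θ := by
      nlinarith [mul_nonneg (mul_nonneg hθ.le (sub_nonneg.2 hθ1)) (add_nonneg hθ.le zero_le_one)]
    nlinarith [amgm3 Y (θ*X) hY (mul_nonneg hθ.le hX),
      mul_nonneg (mul_nonneg (sub_nonneg.2 hθ3) (pow_nonneg hY 3)) hX]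
  · nlinarith [pow_nonneg hY 4, mul_nonneg hθ.le (pow_nonneg hX 4),
      mul_nonneg (sub_nonneg.2 (pow_le_one₀ hθ.le hθ1 : θ^3 ≤ 1)) (pow_nonneg hY 4)]

set_option maxHeartbeats 1000000 in
lemma final_arith (M₂ m h κ qa Q D I1 I2 I3 I4 : ℝ)
    (hM₂ : 0 < M₂) (hm : 0 < m) (hmM : m ≤ M₂) (hh : 0 < h) (hh4 : h ≤ 1/4)
    (hκ : 1 ≤ κ) (hD : 1 ≤ D) (hqa : 0 ≤ qa) (hQ : 0 ≤ Q)
    (hcontr : qa ≤ (1 - m*h/(2*M₂)) * Q)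
    (h1 : I1 ≤ κ*D) (h2 : I2 ≤ κ*D^2) (h3 : I3 ≤ κ*D^3) (h4 : I4 ≤ κ*D^4) :
    qa^4 + 28*qa^3*h*I1 + 70*qa^2*h^2*I2 + 28*qa*h^3*I3 + h^4*I4
      ≤ (1 - m*h/(2*M₂)) * Q^4 + (8*M₂^3*(280*κ)^4) * D^4 * h / m^3 := by
  have hκ0 : (0:ℝ) < κ := by linarith
  set ε := m*h/(2*M₂) with hεdef
  clear_value ε
  have hε : 0 < ε := by rw [hεdef]; positivity
  have hε8 : ε ≤ 1/8 := by
    rw [hεdef, div_le_div_iff₀ (by positivity) (by norm_num)]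
    nlinarith
  set θ := ε/(280*κ) with hθdef
  clear_value θ
  have hθ : 0 < θ := by rw [hθdef]; positivity
  have hθ1 : θ ≤ 1 := by
    rw [hθdef, div_le_one (by positivity)]
    nlinarith
  obtain ⟨y1, y2, y3, y4⟩ := young qa (D*h) θ hqa (by positivity) hθ hθ1
  set R := θ*qa^4 + (D*h)^4/θ^3 with hRdef
  clear_value R
  have t1 : 28*qa^3*h*I1 ≤ 28*κ*R := by
    calc 28*qa^3*h*I1 = (28*qa^3*h)*I1 := by ring
      _ ≤ (28*qa^3*h)*(κ*D) := mul_le_mul_of_nonneg_left h1 (by positivity)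
      _ = 28*κ*((D*h)*qa^3) := by ring
      _ ≤ 28*κ*R := mul_le_mul_of_nonneg_left y1 (by linarith)
  have t2 : 70*qa^2*h^2*I2 ≤ 70*κ*R := by
    calc 70*qa^2*h^2*I2 = (70*qa^2*h^2)*I2 := by ring
      _ ≤ (70*qa^2*h^2)*(κ*D^2) := mul_le_mul_of_nonneg_left h2 (by positivity)
      _ = 70*κ*((D*h)^2*qa^2) := by ring
      _ ≤ 70*κ*R := mul_le_mul_of_nonneg_left y2 (by linarith)
  have t3 : 28*qa*h^3*I3 ≤ 28*κ*R := by
    calc 28*qa*h^3*I3 = (28*qa*h^3)*I3 := by ring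
      _ ≤ (28*qa*h^3)*(κ*D^3) := mul_le_mul_of_nonneg_left h3 (by positivity)
      _ = 28*κ*((D*h)^3*qa) := by ring
      _ ≤ 28*κ*R := mul_le_mul_of_nonneg_left y3 (by linarith)
  have t4 : h^4*I4 ≤ κ*R := by
    calc h^4*I4 ≤ h^4*(κ*D^4) := mul_le_mul_of_nonneg_left h4 (by positivity)
      _ = κ*(D*h)^4 := by ring
      _ ≤ κ*R := mul_le_mul_of_nonneg_left y4 (by linarith)
  have hθε : 280*κ*θ = ε := by rw [hθdef]; field_simp
  have hqaθ : 0 ≤ κ*θ*qa^4 := by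
    have := mul_nonneg (mul_nonneg hκ0.le hθ.le) (pow_nonneg hqa 4)
    linarith [this]
  have kqa : 127*κ*(θ*qa^4) ≤ ε*qa^4 := by
    calc 127*κ*(θ*qa^4) = 127*(κ*θ*qa^4) := by ring
      _ ≤ 280*(κ*θ*qa^4) := by linarith
      _ = (280*κ*θ)*qa^4 := by ring
      _ = ε*qa^4 := by rw [hθε]
  have e : (D*h)^4/θ^3 = 8*M₂^3*(280*κ)^3*(D^4*h/m^3) := by
    rw [hθdef, hεdef]; field_simp; ring
  have hX : 0 ≤ M₂^3*κ^4*(D^4*h/m^3) := by positivity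
  have kslack : 127*κ*((D*h)^4/θ^3) ≤ 8*M₂^3*(280*κ)^4*D^4*h/m^3 := by
    calc 127*κ*((D*h)^4/θ^3) = 127*8*280^3*(M₂^3*κ^4*(D^4*h/m^3)) := by rw [e]; ring
      _ ≤ 280*8*280^3*(M₂^3*κ^4*(D^4*h/m^3)) := mul_le_mul_of_nonneg_right (by norm_num) hX
      _ = 8*M₂^3*(280*κ)^4*D^4*h/m^3 := by ring
  have hc4 : qa^4 ≤ ((1-ε)*Q)^4 := pow_le_pow_left₀ hqa hcontr 4
  have hsq : ε^2 ≤ 1 := by nlinarith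
  have hcube : ε^3 ≤ ε := by nlinarith [mul_nonneg hε.le (sub_nonneg.2 hsq)]
  have hcontr' : (1+ε)*(1-ε)^4 ≤ 1-ε := by
    have key : (1+ε)*(1-ε)^4 - (1-ε) = -((1-ε)*((2*ε - 2*ε^3) + ε^4)) := by ring
    have hnn : 0 ≤ (1-ε)*((2*ε - 2*ε^3) + ε^4) :=
      mul_nonneg (by linarith) (by nlinarith [pow_nonneg hε.le 4])
    linarith [key, hnn]
  have kmain : qa^4 + ε*qa^4 ≤ (1-ε)*Q^4 := by
    have h2' : (1+ε)*qa^4 ≤ (1+ε)*((1-ε)*Q)^4 :=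
      mul_le_mul_of_nonneg_left hc4 (by linarith)
    nlinarith [mul_le_mul_of_nonneg_right hcontr' (pow_nonneg hQ 4)]
  have total : 28*qa^3*h*I1 + 70*qa^2*h^2*I2 + 28*qa*h^3*I3 + h^4*I4
      ≤ 127*κ*(θ*qa^4) + 127*κ*((D*h)^4/θ^3) := by
    have : (28:ℝ)*κ*R + 70*κ*R + 28*κ*R + κ*R = 127*κ*(θ*qa^4) + 127*κ*((D*h)^4/θ^3) := by
      rw [hRdef]; ring
    linarith
  linarith

/-! ### The quadratic form associated to `Smat` -/

def phi (d : ℕ) (z : Fin d ⊕ Fin d → ℝ) : Fin d ⊕ Fin d → ℝ :=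
  Sum.elim (fun j => z (Sum.inl j)) (fun j => z (Sum.inl j) + z (Sum.inr j))

lemma dot_smat (d : ℕ) (z z' : Fin d ⊕ Fin d → ℝ) :
    z ⬝ᵥ (Smat d).mulVec z' = ∑ i, phi d z i * phi d z' i := by
  simp only [dotProduct, Fintype.sum_sum_type, phi, Sum.elim_inl, Sum.elim_inr,
    Smat, Matrix.mulVec, Matrix.fromBlocks, Matrix.one_apply, Matrix.of_apply, Sum.elim_inl,
    Sum.elim_inr, dotProduct, smul_eq_mul, Matrix.smul_apply]
  simp [Finset.mul_sum, Finset.sum_add_distrib, Matrix.one_apply]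
  rw [← Finset.sum_add_distrib, ← Finset.sum_add_distrib]
  exact Finset.sum_congr rfl fun i _ => by ring

lemma dot_smat_self (d : ℕ) (z : Fin d ⊕ Fin d → ℝ) :
    z ⬝ᵥ (Smat d).mulVec z = ∑ i, (phi d z i)^2 := by
  rw [dot_smat]
  exact Finset.sum_congr rfl fun i _ => (pow_two (phi d z i)).symm

lemma phi_add_smul (d : ℕ) (x y : Fin d ⊕ Fin d → ℝ) (c : ℝ) (i : Fin d ⊕ Fin d) :
    phi d (x + c • y) i = phi d x i + c * phi d y i := by
  cases i <;> simp [phi] <;> ring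

lemma phi_neg (d : ℕ) (x : Fin d ⊕ Fin d → ℝ) (i : Fin d ⊕ Fin d) :
    phi d (-x) i = - phi d x i := by
  cases i <;> simp [phi] <;> ring

lemma measurable_phi (d : ℕ) (i : Fin d ⊕ Fin d) :
    Measurable fun v : Fin d ⊕ Fin d → ℝ => phi d v i := by
  cases i with
  | inl j => exact measurable_pi_apply _
  | inr j => exact (measurable_pi_apply _).add (measurable_pi_apply _)

lemma sum_sq_expand {ι : Type*} [Fintype ι] (p q : ι → ℝ) (s : ℝ) :
    ∑ i, (p i + s * q i) * (p i + s * q i)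
      = (∑ i, (p i)^2) + 2*s*(∑ i, p i * q i) + s^2*(∑ i, (q i)^2) := by
  rw [Finset.mul_sum, Finset.mul_sum, ← Finset.sum_add_distrib, ← Finset.sum_add_distrib]
  exact Finset.sum_congr rfl fun i _ => by ring

lemma q_le3 (d : ℕ) (v : Fin d ⊕ Fin d → ℝ) :
    ∑ i, (phi d v i)^2 ≤ 3*∑ i, (v i)^2 := by
  simp only [Fintype.sum_sum_type, phi, Sum.elim_inl, Sum.elim_inr]
  have key : ∀ j : Fin d, (v (Sum.inl j))^2 + (v (Sum.inl j) + v (Sum.inr j))^2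
      ≤ 3*(v (Sum.inl j))^2 + 3*(v (Sum.inr j))^2 := by
    intro j
    nlinarith [sq_nonneg (v (Sum.inl j) - v (Sum.inr j)), sq_nonneg (v (Sum.inr j))]
  have hs := Finset.sum_le_sum (fun j (_ : j ∈ Finset.univ) => key j)
  simp only [Finset.sum_add_distrib] at hs
  rw [mul_add]
  simp only [Finset.mul_sum] at *
  linarith

lemma smat_contraction (d : ℕ) (c : ℝ) (A : Matrix (Fin d ⊕ Fin d) (Fin d ⊕ Fin d) ℝ)
    (hPSD : (c • Smat d - Aᵀ * Smat d * A).PosSemidef) (z₀ : Fin d ⊕ Fin d → ℝ) :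
    (A.mulVec z₀) ⬝ᵥ (Smat d).mulVec (A.mulVec z₀) ≤ c * (z₀ ⬝ᵥ (Smat d).mulVec z₀) := by
  have h0 := hPSD.dotProduct_mulVec_nonneg z₀
  rw [star_trivial, Matrix.sub_mulVec, dotProduct_sub, Matrix.smul_mulVec,
    dotProduct_smul] at h0
  have e : z₀ ⬝ᵥ (Aᵀ * Smat d * A).mulVec z₀
      = (A.mulVec z₀) ⬝ᵥ (Smat d).mulVec (A.mulVec z₀) := by
    rw [← Matrix.mulVec_mulVec, ← Matrix.mulVec_mulVec, Matrix.dotProduct_mulVec,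
      Matrix.vecMul_transpose]
  rw [e] at h0
  simp only [smul_eq_mul] at h0
  linarith

set_option maxHeartbeats 2000000 in
theorem stmt_5 : ∀ K M₂ : ℝ, 0 < K → 0 < M₂ → ∃ C : ℝ, 0 < C ∧
    ∀ d : ℕ, 1 ≤ d → ∀ m h : ℝ, 0 < m → m ≤ M₂ → 0 < h → h ≤ 1 / 4 →
    ∀ A : Matrix (Fin d ⊕ Fin d) (Fin d ⊕ Fin d) ℝ,
    ((1 - m * h / (2 * M₂)) • Smat d - Aᵀ * Smat d * A).PosSemidef →
    ∀ z₀ : Fin d ⊕ Fin d → ℝ,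
    ∀ (Ω : Type) [MeasurableSpace Ω] (μ : Measure Ω), IsProbabilityMeasure μ →
    ∀ w : Ω → Fin d ⊕ Fin d → ℝ, Measurable w →
    Measure.map w μ = Measure.map (fun ω => -(w ω)) μ →
    Integrable (fun ω => (∑ i, (w ω i) ^ 2) ^ 4) μ →
    (∫ ω, (∑ i, (w ω i) ^ 2) ^ 4 ∂μ) ≤ K * d ^ 4 →
    (∫ ω, ((A.mulVec z₀ + Real.sqrt h • w ω) ⬝ᵥ
        ((Smat d).mulVec (A.mulVec z₀ + Real.sqrt h • w ω))) ^ 4 ∂μ)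
      ≤ (1 - m * h / (2 * M₂)) * (z₀ ⬝ᵥ ((Smat d).mulVec z₀)) ^ 4 + C * d ^ 4 * h / m ^ 3 := by
  intro K M₂ hK hM₂
  refine ⟨8*M₂^3*(280*(81*K+1))^4, by positivity, ?_⟩
  intro d hd m h hm hmM hh hh4 A hPSD z₀ Ω _ μ hprob w hw hsym hint8 hmom8
  have hd0 : (0:ℝ) < d := by exact_mod_cast Nat.lt_of_lt_of_le Nat.zero_lt_one hd
  have hd1 : (1:ℝ) ≤ d := by exact_mod_cast hd
  set s := Real.sqrt h with hsdef
  have hs0 : 0 ≤ s := Real.sqrt_nonneg h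
  have hs2 : s^2 = h := Real.sq_sqrt hh.le
  set a := A.mulVec z₀ with hadef
  set κ := 81*K+1 with hκdef
  have hκ1 : (1:ℝ) ≤ κ := by rw [hκdef]; nlinarith
  set qa := ∑ i, (phi d a i)^2 with hqadef
  set Q := ∑ i, (phi d z₀ i)^2 with hQdef
  set qw : Ω → ℝ := fun ω => ∑ i, (phi d (w ω) i)^2 with hqwdef
  set bw : Ω → ℝ := fun ω => ∑ i, phi d a i * phi d (w ω) i with hbwdef
  have hqa0 : 0 ≤ qa := Finset.sum_nonneg fun i _ => sq_nonneg _
  have hQ0 : 0 ≤ Q := Finset.sum_nonneg fun i _ => sq_nonneg _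
  have hqw0 : ∀ ω, 0 ≤ qw ω := fun ω => Finset.sum_nonneg fun i _ => sq_nonneg _
  have hw2 : ∀ ω, (0:ℝ) ≤ ∑ i, (w ω i)^2 := fun ω => Finset.sum_nonneg fun i _ => sq_nonneg _
  -- contraction
  have hcoer : qa ≤ (1 - m*h/(2*M₂))*Q := by
    have h0 := smat_contraction d (1 - m*h/(2*M₂)) A hPSD z₀
    rw [dot_smat_self, dot_smat_self, ← hadef] at h0
    exact h0
  -- the integrand as a function of the noise vector
  set F : (Fin d ⊕ Fin d → ℝ) → ℝ := fun v =>
    (qa + 2*s*(∑ i, phi d a i * phi d v i) + h*(∑ i, (phi d v i)^2))^4 with hFdef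
  have hFw : ∀ ω, F (w ω) = (qa + 2*s*bw ω + h*qw ω)^4 := fun ω => rfl
  have hFnegw : ∀ ω, F (-(w ω)) = (qa - 2*s*bw ω + h*qw ω)^4 := by
    intro ω
    simp only [hFdef, hbwdef, hqwdef]
    simp only [phi_neg, mul_neg, neg_sq, Finset.sum_neg_distrib]
    ring
  have hbase : ∀ ω, ((a + s • w ω) ⬝ᵥ (Smat d).mulVec (a + s • w ω))
      = qa + 2*s*bw ω + h*qw ω := by
    intro ω
    rw [dot_smat]
    have e1 : ∀ i, phi d (a + s • w ω) i = phi d a i + s * phi d (w ω) i :=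
      fun i => phi_add_smul d a (w ω) s i
    simp_rw [e1]
    rw [sum_sq_expand (phi d a) (phi d (w ω)) s, hs2]
  -- measurability
  have hFmeas : Measurable F := by
    rw [hFdef]
    apply Measurable.pow_const
    apply Measurable.add
    apply Measurable.add measurable_const
    · exact (Finset.measurable_sum Finset.univ fun i _ =>
        (measurable_phi d i).const_mul (phi d a i)).const_mul (2*s)
    · exact (Finset.measurable_sum Finset.univ fun i _ =>
        (measurable_phi d i).pow_const 2).const_mul h
  have hqwmeas : Measurable qw := by
    rw [hqwdef]
    exact Finset.measurable_sum Finset.univ fun i _ => ((measurable_phi d i).comp hw).pow_const 2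
  -- symmetry of the law of w
  have hsyme : ∫ ω, F (w ω) ∂μ = ∫ ω, F (-(w ω)) ∂μ := by
    have h1 : ∫ ω, F (w ω) ∂μ = ∫ v, F v ∂(Measure.map w μ) :=
      (integral_map hw.aemeasurable hFmeas.aestronglyMeasurable).symm
    have h2 : ∫ v, F v ∂(Measure.map (fun ω => -(w ω)) μ) = ∫ ω, F (-(w ω)) ∂μ :=
      integral_map hw.neg.aemeasurable hFmeas.aestronglyMeasurable
    rw [h1, hsym, h2]
  -- Cauchy–Schwarz
  have hCS : ∀ ω, (bw ω)^2 ≤ qa * qw ω := by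
    intro ω
    simp only [hbwdef, hqadef, hqwdef]
    exact Finset.sum_mul_sq_le_sq_mul_sq Finset.univ (phi d a) (phi d (w ω))
  have hB2 : ∀ ω, (2*s*bw ω)^2 ≤ 4*qa*(h*qw ω) := by
    intro ω
    have e : (2*s*bw ω)^2 = 4*h*(bw ω)^2 := by rw [← hs2]; ring
    rw [e]
    nlinarith [hCS ω, hh.le, mul_le_mul_of_nonneg_left (hCS ω) hh.le]
  -- moment bounds
  have hqw3 : ∀ ω, qw ω ≤ 3*∑ i, (w ω i)^2 := by
    intro ω
    simp only [hqwdef]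
    exact q_le3 d (w ω)
  have h81 : Integrable (fun ω => 81*(∑ i, (w ω i)^2)^4) μ := hint8.const_mul 81
  have hdconst : Integrable (fun _ : Ω => (d:ℝ)^4) μ := integrable_const _
  have hN : Integrable (fun ω => 81*(∑ i, (w ω i)^2)^4 + (d:ℝ)^4) μ := h81.add hdconst
  have hdomb : ∀ j : ℕ, j ≤ 4 → ∀ ω,
      (qw ω)^j * (d:ℝ)^(4-j) ≤ 81*(∑ i, (w ω i)^2)^4 + (d:ℝ)^4 := by
    intro j hj ω
    have h1 : (qw ω)^j ≤ (3*∑ i, (w ω i)^2)^j :=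
      pow_le_pow_left₀ (hqw0 ω) (hqw3 ω) j
    have h2 := amgm4 (3*∑ i, (w ω i)^2) (d:ℝ)
      (mul_nonneg (by norm_num) (hw2 ω)) hd0.le j hj
    calc (qw ω)^j * (d:ℝ)^(4-j)
        ≤ (3*∑ i, (w ω i)^2)^j * (d:ℝ)^(4-j) :=
          mul_le_mul_of_nonneg_right h1 (pow_nonneg hd0.le _)
      _ ≤ (3*∑ i, (w ω i)^2)^4 + (d:ℝ)^4 := h2
      _ = 81*(∑ i, (w ω i)^2)^4 + (d:ℝ)^4 := by ring
  have hqwj_int : ∀ j : ℕ, 1 ≤ j → j ≤ 4 → Integrable (fun ω => (qw ω)^j) μ := by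
    intro j hj1 hj4
    have hd41 : (1:ℝ) ≤ (d:ℝ)^(4-j) := one_le_pow₀ hd1
    refine hN.mono' ((hqwmeas.pow_const j).aestronglyMeasurable) (.of_forall fun ω => ?_)
    rw [Real.norm_eq_abs, abs_of_nonneg (pow_nonneg (hqw0 ω) j)]
    exact (le_mul_of_one_le_right (pow_nonneg (hqw0 ω) j) hd41).trans (hdomb j hj4 ω)
  have hmomj : ∀ j : ℕ, 1 ≤ j → j ≤ 4 → (∫ ω, (qw ω)^j ∂μ) ≤ κ*(d:ℝ)^j := by
    intro j hj1 hj4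
    have hdp : (0:ℝ) < (d:ℝ)^(4-j) := pow_pos hd0 _
    have key : (∫ ω, (qw ω)^j ∂μ) * (d:ℝ)^(4-j) ≤ κ*(d:ℝ)^4 := by
      rw [← integral_mul_const]
      calc ∫ ω, (qw ω)^j * (d:ℝ)^(4-j) ∂μ
          ≤ ∫ ω, (81*(∑ i, (w ω i)^2)^4 + (d:ℝ)^4) ∂μ :=
            integral_mono_of_nonneg
              (.of_forall fun ω => mul_nonneg (pow_nonneg (hqw0 ω) j) hdp.le)
              hN (.of_forall (hdomb j hj4))
        _ = 81*(∫ ω, (∑ i, (w ω i)^2)^4 ∂μ) + (d:ℝ)^4 := by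
            rw [integral_add h81 hdconst, integral_const_mul, integral_const]
            simp [measure_univ]
        _ ≤ 81*(K*(d:ℝ)^4) + (d:ℝ)^4 := by
            have := mul_le_mul_of_nonneg_left hmom8 (by norm_num : (0:ℝ) ≤ 81)
            push_cast at this ⊢
            linarith
        _ = κ*(d:ℝ)^4 := by rw [hκdef]; ring
    have e4 : κ*(d:ℝ)^4 = (κ*(d:ℝ)^j)*(d:ℝ)^(4-j) := by
      rw [mul_assoc, ← pow_add]
      congr 2
      omega
    rw [e4] at key
    exact le_of_mul_le_mul_right key hdp
  -- integrability of the two even reflections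
  have hFw_int : Integrable (fun ω => F (w ω)) μ := by
    have hmeas : Measurable fun ω => F (w ω) := hFmeas.comp hw
    have hdint : Integrable (fun ω => 256*qa^4 + (256*h^4)*(qw ω)^4) μ :=
      (integrable_const _).add ((hqwj_int 4 (by norm_num) le_rfl).const_mul _)
    refine hdint.mono' hmeas.aestronglyMeasurable (.of_forall fun ω => ?_)
    rw [Real.norm_eq_abs, hFw ω, abs_of_nonneg (by positivity)]
    have := even_dom qa (2*s*bw ω) (h*qw ω) hqa0 (mul_nonneg hh.le (hqw0 ω)) (hB2 ω)
    nlinarith [this]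
  have hFnw_int : Integrable (fun ω => F (-(w ω))) μ := by
    have hmeas : Measurable fun ω => F (-(w ω)) := hFmeas.comp hw.neg
    have hdint : Integrable (fun ω => 256*qa^4 + (256*h^4)*(qw ω)^4) μ :=
      (integrable_const _).add ((hqwj_int 4 (by norm_num) le_rfl).const_mul _)
    refine hdint.mono' hmeas.aestronglyMeasurable (.of_forall fun ω => ?_)
    rw [Real.norm_eq_abs, hFnegw ω, abs_of_nonneg (by positivity)]
    have hB2' : (-(2*s*bw ω))^2 ≤ 4*qa*(h*qw ω) := by rw [neg_sq]; exact hB2 ω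
    have := even_dom qa (-(2*s*bw ω)) (h*qw ω) hqa0 (mul_nonneg hh.le (hqw0 ω)) hB2'
    nlinarith [this]
  -- the dominating even polynomial
  set G : Ω → ℝ := fun ω => qa^4 + ((28*qa^3*h)*(qw ω)^1 + ((70*qa^2*h^2)*(qw ω)^2 +
      ((28*qa*h^3)*(qw ω)^3 + h^4*(qw ω)^4))) with hGdef
  have i1 := hqwj_int 1 (by norm_num) (by norm_num)
  have i2 := hqwj_int 2 (by norm_num) (by norm_num)
  have i3 := hqwj_int 3 (by norm_num) (by norm_num)
  have i4 := hqwj_int 4 (by norm_num) (by norm_num)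
  have j1 : Integrable (fun ω => (28*qa^3*h)*(qw ω)^1) μ := i1.const_mul _
  have j2 : Integrable (fun ω => (70*qa^2*h^2)*(qw ω)^2) μ := i2.const_mul _
  have j3 : Integrable (fun ω => (28*qa*h^3)*(qw ω)^3) μ := i3.const_mul _
  have j4 : Integrable (fun ω => h^4*(qw ω)^4) μ := i4.const_mul _
  have j34 : Integrable (fun ω => (28*qa*h^3)*(qw ω)^3 + h^4*(qw ω)^4) μ := j3.add j4
  have j234 : Integrable (fun ω => (70*qa^2*h^2)*(qw ω)^2 +
      ((28*qa*h^3)*(qw ω)^3 + h^4*(qw ω)^4)) μ := j2.add j34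
  have j1234 : Integrable (fun ω => (28*qa^3*h)*(qw ω)^1 + ((70*qa^2*h^2)*(qw ω)^2 +
      ((28*qa*h^3)*(qw ω)^3 + h^4*(qw ω)^4))) μ := j1.add j234
  have jconst : Integrable (fun _ : Ω => qa^4) μ := integrable_const _
  have hGint : Integrable G μ := by
    rw [hGdef]
    exact jconst.add j1234
  have hGpt : ∀ ω, F (w ω) + F (-(w ω)) ≤ 2*G ω := by
    intro ω
    rw [hFw ω, hFnegw ω]
    have h1 := evenpart qa (2*s*bw ω) (h*qw ω) hqa0 (mul_nonneg hh.le (hqw0 ω)) (hB2 ω)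
    have h2 : 2*(qa^4 + 28*qa^3*(h*qw ω) + 70*qa^2*(h*qw ω)^2 + 28*qa*(h*qw ω)^3 + (h*qw ω)^4)
        = 2*G ω := by
      simp only [hGdef]
      ring
    linarith
  have hstep : ∫ ω, F (w ω) ∂μ ≤ ∫ ω, G ω ∂μ := by
    have hmono : ∫ ω, (F (w ω) + F (-(w ω))) ∂μ ≤ ∫ ω, 2*G ω ∂μ :=
      integral_mono (hFw_int.add hFnw_int) (hGint.const_mul 2) hGpt
    rw [integral_add hFw_int hFnw_int, integral_const_mul] at hmono
    linarith [hsyme, hmono]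
  have hGval : ∫ ω, G ω ∂μ = qa^4 + ((28*qa^3*h)*(∫ ω, (qw ω)^1 ∂μ) +
      ((70*qa^2*h^2)*(∫ ω, (qw ω)^2 ∂μ) + ((28*qa*h^3)*(∫ ω, (qw ω)^3 ∂μ) +
      h^4*(∫ ω, (qw ω)^4 ∂μ)))) := by
    simp only [hGdef]
    rw [integral_add jconst j1234, integral_add j1 j234, integral_add j2 j34,
      integral_add j3 j4,
      integral_const_mul, integral_const_mul, integral_const_mul, integral_const_mul, integral_const]
    simp [measure_univ]
  -- assemble
  have hfinal := final_arith M₂ m h κ qa Q (d:ℝ)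
    (∫ ω, (qw ω)^1 ∂μ) (∫ ω, (qw ω)^2 ∂μ) (∫ ω, (qw ω)^3 ∂μ) (∫ ω, (qw ω)^4 ∂μ)
    hM₂ hm hmM hh hh4 hκ1 hd1 hqa0 hQ0 hcoer
    (by simpa using hmomj 1 (by norm_num) (by norm_num))
    (hmomj 2 (by norm_num) (by norm_num))
    (hmomj 3 (by norm_num) (by norm_num))
    (hmomj 4 (by norm_num) (by norm_num))
  have hinteq : (∫ ω, ((a + s • w ω) ⬝ᵥ (Smat d).mulVec (a + s • w ω))^4 ∂μ)
      = ∫ ω, F (w ω) ∂μ := by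
    apply integral_congr_ae
    filter_upwards with ω
    rw [hbase ω, hFw ω]
  rw [dot_smat_self d z₀, ← hQdef, hinteq]
  calc ∫ ω, F (w ω) ∂μ ≤ ∫ ω, G ω ∂μ := hstep
    _ = qa^4 + ((28*qa^3*h)*(∫ ω, (qw ω)^1 ∂μ) + ((70*qa^2*h^2)*(∫ ω, (qw ω)^2 ∂μ) +
        ((28*qa*h^3)*(∫ ω, (qw ω)^3 ∂μ) + h^4*(∫ ω, (qw ω)^4 ∂μ)))) := hGval
    _ ≤ (1 - m*h/(2*M₂)) * Q^4 + (8*M₂^3*(280*κ)^4) * (d:ℝ)^4 * h / m^3 := by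
        linarith [hfinal]
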